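/- Let X be a complex Banach space with open unit ball B, and let Y be a closed finite-codimensional subspace of X with unit ball B_Y. Then for every f ∈ A_u(B), the cluster set of f at 0 over B equals the cluster set of the restriction f|_Y at 0 over B_Y: Cl_B(f, 0) = Cl_{B_Y}(f|_Y, 0). -/

import Mathlib

open Metric Filter Topology

namespace ClusterValue

variable (X : Type*) [NormedAddCommGroup X] [NormedSpace ℂ X]

/-- Membership in `A_u(B)`: analytic on the open unit ball, bounded there,
and uniformly continuous there. -/
def MemAu (f : X → ℂ) : Prop :=
  AnalyticOn ℂ f (ball (0 : X) 1) ∧ (∃ C : ℝ, ∀ x ∈ ball (0 : X) 1, ‖f x‖ ≤ C) ∧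
    UniformContinuousOn f (ball (0 : X) 1)

/-- Membership in `H^∞(B)`: analytic on the open unit ball and bounded there. -/
def MemHinf (f : X → ℂ) : Prop :=
  AnalyticOn ℂ f (ball (0 : X) 1) ∧ (∃ C : ℝ, ∀ x ∈ ball (0 : X) 1, ‖f x‖ ≤ C)

/-- A character (nonzero continuous multiplicative linear functional) of the algebra
of functions on the open unit ball of `X` determined by the membership predicate `Mem`.
Functions are identified when they agree on the ball. -/
structure Character (Mem : (X → ℂ) → Prop) : Type _ where
  toFun : (X → ℂ) → ℂ
  congr' : ∀ f g, Mem f → Mem g → (∀ x ∈ ball (0 : X) 1, f x = g x) → toFun f = toFun g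
  map_add' : ∀ f g, Mem f → Mem g → toFun (f + g) = toFun f + toFun g
  map_mul' : ∀ f g, Mem f → Mem g → toFun (f * g) = toFun f * toFun g
  map_smul' : ∀ (c : ℂ) (f), Mem f → toFun (c • f) = c * toFun f
  map_one' : toFun 1 = 1
  continuous' : ∃ C : ℝ, ∀ (f : X → ℂ) (M : ℝ), Mem f →
    (∀ x ∈ ball (0 : X) 1, ‖f x‖ ≤ M) → ‖toFun f‖ ≤ C * M

variable {X}

/-- The fiber over `0`: characters annihilating all continuous linear functionals. -/
def Character.inFiberZero {Mem : (X → ℂ) → Prop} (τ : Character X Mem) : Prop :=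
  ∀ φ : X →L[ℂ] ℂ, τ.toFun ⇑φ = 0

/-- The fiber over `x'' ∈ X**`. -/
def Character.inFiber {Mem : (X → ℂ) → Prop} (τ : Character X Mem)
    (x'' : (X →L[ℂ] ℂ) →L[ℂ] ℂ) : Prop :=
  ∀ φ : X →L[ℂ] ℂ, τ.toFun ⇑φ = x'' φ

variable (X)

/-- The cluster set of `f` at `0`: limits of `f` along weakly null nets (filters) in the ball. -/
def clusterSetZero (f : X → ℂ) : Set ℂ :=
  {z | ∃ l : Filter X, l.NeBot ∧ l ≤ 𝓟 (ball (0 : X) 1) ∧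
    (∀ φ : X →L[ℂ] ℂ, Tendsto (fun x => φ x) l (𝓝 0)) ∧ Tendsto f l (𝓝 z)}

/-- The cluster set of `f` at `x'' ∈ X**`: limits of `f` along nets in the ball converging
weak-star to `x''`. -/
def clusterSet (f : X → ℂ) (x'' : (X →L[ℂ] ℂ) →L[ℂ] ℂ) : Set ℂ :=
  {z | ∃ l : Filter X, l.NeBot ∧ l ≤ 𝓟 (ball (0 : X) 1) ∧
    (∀ φ : X →L[ℂ] ℂ, Tendsto (fun x => φ x) l (𝓝 (x'' φ))) ∧ Tendsto f l (𝓝 z)}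

/-- A finite rank (bounded linear) operator. -/
def FiniteRank (S : X →L[ℂ] X) : Prop :=
  FiniteDimensional ℂ ↥(LinearMap.range (S : X →ₗ[ℂ] X))

/-- Finite type polynomials: the subalgebra of functions generated by the
continuous linear functionals (and constants). -/
def IsFiniteTypePoly (p : X → ℂ) : Prop :=
  p ∈ Algebra.adjoin ℂ (Set.range fun φ : X →L[ℂ] ℂ => (⇑φ : X → ℂ))

/-- Membership in `A(B)`: uniform limits on the ball of finite type polynomials. -/
def MemA (f : X → ℂ) : Prop :=
  ∀ ε > (0 : ℝ), ∃ p : X → ℂ, IsFiniteTypePoly X p ∧ ∀ x ∈ ball (0 : X) 1, ‖f x - p x‖ ≤ ε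

/-- A continuous polynomial: a finite sum of (diagonals of) continuous multilinear maps. -/
def IsContPoly (p : X → ℂ) : Prop :=
  ∃ (N : ℕ) (M : ∀ k : ℕ, ContinuousMultilinearMap ℂ (fun _ : Fin k => X) ℂ),
    ∀ x, p x = ∑ k ∈ Finset.range N, M k (fun _ => x)

end ClusterValue


/-!
Writing `X = Y ⊕ q` with `q` finite-dimensional (a topological complement, since `Y` is closed
of finite codimension), the `q`-component `R x` of a weakly null net `x` in the ball tends to `0`
in norm, because weak and norm topologies agree on `q`. Then
`g x = (1 + ‖R x‖)⁻¹ • (x - R x)` lies in the ball of `Y` within `2 ‖R x‖` of `x`, so by uniform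
continuity `f (g x)` has the same limit as `f x`, and `g x` is weakly null in `Y` by Hahn–Banach.
The reverse inclusion only needs that functionals on `X` restrict to `Y`.
-/

open Metric Filter Topology Uniformity ClusterValue

section WeaklyNull

variable {𝕜 X : Type*} [RCLike 𝕜] [NormedAddCommGroup X] [NormedSpace 𝕜 X]

variable (𝕜) in
def IsWeaklyNull (l : Filter X) : Prop :=
  ∀ φ : X →L[𝕜] 𝕜, Tendsto φ l (𝓝 0)

theorem IsWeaklyNull.tendsto_of_finiteDimensional {E : Type*} [NormedAddCommGroup E]
    [NormedSpace 𝕜 E] [FiniteDimensional 𝕜 E] {l : Filter X} (hl : IsWeaklyNull 𝕜 l)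
    (L : X →L[𝕜] E) : Tendsto L l (𝓝 0) := by
  let e := (Module.finBasis 𝕜 E).equivFunL
  have hcoord : Tendsto (fun x => e (L x)) l (𝓝 0) :=
    tendsto_pi_nhds.2 fun i =>
      hl ((ContinuousLinearMap.proj (φ := fun _ => 𝕜) i).comp ((e : E →L[𝕜] _).comp L) :)
  simpa [Function.comp_def] using (e.symm.continuous.tendsto 0).comp hcoord

theorem IsWeaklyNull.map_of_tendsto_sub {l : Filter X} (hl : IsWeaklyNull 𝕜 l) {g : X → X}
    (hg : Tendsto (fun x => g x - x) l (𝓝 0)) : IsWeaklyNull 𝕜 (map g l) := by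
  intro φ
  have : Tendsto (fun x => φ (g x - x) + φ x) l (𝓝 (φ 0 + 0)) :=
    ((φ.continuous.tendsto 0).comp hg).add (hl φ)
  simpa [Filter.tendsto_map'_iff, Function.comp_def] using this

theorem isWeaklyNull_map_subtype_iff (Y : Submodule 𝕜 X) (l : Filter Y) :
    IsWeaklyNull 𝕜 (map Subtype.val l) ↔ IsWeaklyNull 𝕜 l := by
  refine ⟨fun hl ψ => ?_, fun hl φ => tendsto_map'_iff.2 (hl (φ.comp Y.subtypeL))⟩
  obtain ⟨φ, hφ, -⟩ := exists_extension_norm_eq Y ψ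
  simpa [Function.comp_def, hφ] using tendsto_map'_iff.1 (hl φ)

end WeaklyNull

section Shrink

variable {E : Type*} [NormedAddCommGroup E] [NormedSpace ℝ E]

theorem norm_inv_one_add_norm_sub_smul_lt_one {x w : E} (hx : ‖x‖ < 1) :
    ‖(1 + ‖x - w‖)⁻¹ • w‖ < 1 := by
  have hw : ‖w‖ < 1 + ‖x - w‖ := by linarith [norm_le_norm_add_norm_sub x w]
  rw [norm_smul, norm_inv, Real.norm_of_nonneg (by positivity)]
  exact (inv_mul_lt_one₀ (by positivity)).2 hw

theorem norm_inv_one_add_norm_sub_smul_sub_le {x w : E} (hx : ‖x‖ ≤ 1) :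
    ‖(1 + ‖x - w‖)⁻¹ • w - x‖ ≤ 2 * ‖x - w‖ := by
  set r := ‖x - w‖
  have hr : 0 ≤ r := norm_nonneg _
  have hw : ‖w‖ ≤ 1 + r := by linarith [norm_le_norm_add_norm_sub x w]
  have hsplit : (1 + r)⁻¹ • w - x = (w - x) - (r / (1 + r)) • w := by
    have : (1 + r)⁻¹ = 1 - r / (1 + r) := by field_simp; ring
    rw [this, sub_smul, one_smul]
    abel
  calc ‖(1 + r)⁻¹ • w - x‖ ≤ ‖w - x‖ + r / (1 + r) * ‖w‖ := by
        rw [hsplit]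
        refine (norm_sub_le _ _).trans ?_
        rw [norm_smul, Real.norm_of_nonneg (by positivity)]
    _ ≤ r + r / (1 + r) * (1 + r) := by
        rw [norm_sub_rev]
        gcongr
    _ = 2 * r := by field_simp; ring

end Shrink

theorem UniformContinuousOn.tendsto_comp_of_tendsto_dist {α β ι : Type*} [PseudoMetricSpace α]
    [PseudoMetricSpace β] {f : α → β} {s : Set α} (hf : UniformContinuousOn f s)
    {l : Filter ι} {g h : ι → α} (hg : ∀ᶠ i in l, g i ∈ s) (hh : ∀ᶠ i in l, h i ∈ s)
    (hgh : Tendsto (fun i => dist (g i) (h i)) l (𝓝 0)) {z : β}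
    (hfh : Tendsto (fun i => f (h i)) l (𝓝 z)) : Tendsto (fun i => f (g i)) l (𝓝 z) := by
  have hhg : Tendsto (fun i => (h i, g i)) l (𝓤 α ⊓ 𝓟 (s ×ˢ s)) := by
    refine tendsto_inf.2 ⟨tendsto_uniformity_iff_dist_tendsto_zero.2 ?_,
      tendsto_principal.2 (hh.and hg)⟩
    simpa only [dist_comm] using hgh
  exact hfh.congr_uniformity (Tendsto.comp hf hhg)

namespace ClusterValue

variable {X : Type*} [NormedAddCommGroup X] [NormedSpace ℂ X]

theorem clusterSetZero_subtype_subset (Y : Submodule ℂ X) (f : X → ℂ) :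
    clusterSetZero Y (fun y => f y) ⊆ clusterSetZero X f := by
  rintro z ⟨l, hl, hlB, hlw, hlf⟩
  have hball : Set.MapsTo Subtype.val (ball (0 : Y) 1) (ball (0 : X) 1) := fun y hy => by
    simpa using hy
  exact ⟨map Subtype.val l, hl.map _, hball.tendsto.mono_left hlB,
    (isWeaklyNull_map_subtype_iff Y l).2 hlw, tendsto_map'_iff.2 hlf⟩

theorem exists_mapsTo_ball_tendsto_norm_sub_of_isWeaklyNull {Y : Submodule ℂ X}
    (hY : IsClosed (Y : Set X)) [FiniteDimensional ℂ (X ⧸ Y)] :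
    ∃ g : X → Y, Set.MapsTo g (ball 0 1) (ball 0 1) ∧
      ∀ u : Filter X, IsWeaklyNull ℂ u → u ≤ 𝓟 (ball 0 1) →
        Tendsto (fun x => ‖(g x : X) - x‖) u (𝓝 0) := by
  obtain ⟨q, hYq⟩ := Y.exists_isCompl
  have hYq' : Submodule.IsTopCompl Y q :=
    Submodule.IsCompl.isTopCompl_of_finiteDimensional_quotient hYq hY
  have : FiniteDimensional ℂ q := (Y.quotientEquivOfIsCompl q hYq).finiteDimensional
  let P := Y.projectionOntoL q hYq'
  let R := q.projectionOntoL Y hYq'.symm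
  have hPR : ∀ x, x - P x = (R x : X) := fun x => by
    rw [sub_eq_iff_eq_add', eq_comm]
    exact Submodule.projectionL_add_projectionL_eq_self hYq' x
  refine ⟨fun x => (1 + ‖R x‖)⁻¹ • P x, fun x hx => ?_, fun u hu huB => ?_⟩
  · have := norm_inv_one_add_norm_sub_smul_lt_one (w := (P x : X)) (mem_ball_zero_iff.1 hx)
    rw [hPR] at this
    simpa using this
  · have hR : Tendsto (fun x => 2 * ‖R x‖) u (𝓝 0) := by
      simpa using ((hu.tendsto_of_finiteDimensional R).norm).const_mul 2
    refine squeeze_zero' (.of_forall fun _ => norm_nonneg _) ?_ hR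
    filter_upwards [le_principal_iff.1 huB] with x hx
    have := norm_inv_one_add_norm_sub_smul_sub_le (w := (P x : X)) (mem_ball_zero_iff.1 hx).le
    rw [hPR] at this
    simpa using this

theorem clusterSetZero_subset_subtype {Y : Submodule ℂ X} (hY : IsClosed (Y : Set X))
    [FiniteDimensional ℂ (X ⧸ Y)] {f : X → ℂ} (hf : UniformContinuousOn f (ball 0 1)) :
    clusterSetZero X f ⊆ clusterSetZero Y (fun y => f y) := by
  rintro z ⟨u, hu, huB, huw : IsWeaklyNull ℂ u, huf⟩
  obtain ⟨g, hg_ball, hg_near⟩ := exists_mapsTo_ball_tendsto_norm_sub_of_isWeaklyNull hY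
  replace hg_near := hg_near u huw huB
  have hu_ball : ∀ᶠ x in u, x ∈ ball (0 : X) 1 := le_principal_iff.1 huB
  refine ⟨map g u, hu.map g, hg_ball.tendsto.mono_left huB, ?_, ?_⟩
  · refine (isWeaklyNull_map_subtype_iff Y _).1 ?_
    rw [map_map]
    exact huw.map_of_tendsto_sub (tendsto_zero_iff_norm_tendsto_zero.2 hg_near)
  · refine tendsto_map'_iff.2 (hf.tendsto_comp_of_tendsto_dist (h := id) ?_ hu_ball ?_ huf)
    · exact hu_ball.mono fun x hx => by simpa using hg_ball hx
    · simpa [dist_eq_norm] using hg_near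

end ClusterValue

open Metric Filter Topology ClusterValue in
theorem statement4 {X : Type*} [NormedAddCommGroup X] [NormedSpace ℂ X]
    (Y : Submodule ℂ X) (hYclosed : IsClosed (Y : Set X))
    (hYcodim : FiniteDimensional ℂ (X ⧸ Y))
    (f : X → ℂ) (hf : MemAu X f) :
    clusterSetZero X f = clusterSetZero ↥Y (fun y => f ↑y) := by
  obtain ⟨-, -, hf_unif⟩ := hf
  exact (clusterSetZero_subset_subtype hYclosed hf_unif).antisymm
    (clusterSetZero_subtype_subset Y f)
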